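/- Inductive step, FE-selection case: for any integer m with 0 ≤ m < M, if |Q(m)| < 1 and Q(m) > 0, then Q(m+1) ≤ Q(m) and Q(m+1) > Q(m) − 1; in particular |Q(m+1)| < 1. -/
import Mathlib


/-- Prior weight for FE at iteration `m`: `ω_FE(m) = p₁ − δ·m` with `δ = (p₁ − 0.5)/M`. -/
noncomputable def omegaFE (M : ℕ) (p₁ : ℝ) (m : ℕ) : ℝ :=
  p₁ - ((p₁ - 0.5) / (M : ℝ)) * (m : ℝ)

/-- Prior weight for HPO at iteration `m`: `ω_HPO(m) = p₂ + δ·m` with `p₂ = 1 − p₁`. -/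
noncomputable def omegaHPO (M : ℕ) (p₁ : ℝ) (m : ℕ) : ℝ :=
  (1 - p₁) + ((p₁ - 0.5) / (M : ℝ)) * (m : ℝ)

/-- State function given counts: `Q = ω_FE(m)·(1 + N_HPO) − ω_HPO(m)·(1 + N_FE)`. -/
noncomputable def Qaux (M : ℕ) (p₁ : ℝ) (m NF NH : ℕ) : ℝ :=
  omegaFE M p₁ m * (1 + (NH : ℝ)) - omegaHPO M p₁ m * (1 + (NF : ℝ))

open Classical in
/-- Joint count sequence `(N_FE(m), N_HPO(m))`: start at `(0,0)`; at each step,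
if `Q(m) > 0` then FE is selected (first count increments), otherwise HPO is selected. -/
noncomputable def counts (M : ℕ) (p₁ : ℝ) : ℕ → ℕ × ℕ
  | 0 => (0, 0)
  | m + 1 =>
    let c := counts M p₁ m
    if 0 < Qaux M p₁ m c.1 c.2 then (c.1 + 1, c.2) else (c.1, c.2 + 1)

/-- `N_FE(m)`: number of times FE has been selected up to iteration `m`. -/
noncomputable def NFE (M : ℕ) (p₁ : ℝ) (m : ℕ) : ℕ := (counts M p₁ m).1

/-- `N_HPO(m)`: number of times HPO has been selected up to iteration `m`. -/
noncomputable def NHPO (M : ℕ) (p₁ : ℝ) (m : ℕ) : ℕ := (counts M p₁ m).2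

/-- The state function `Q(m) = ω_FE(m)·(1 + N_HPO(m)) − ω_HPO(m)·(1 + N_FE(m))`. -/
noncomputable def Q (M : ℕ) (p₁ : ℝ) (m : ℕ) : ℝ :=
  Qaux M p₁ m (NFE M p₁ m) (NHPO M p₁ m)

lemma counts_sum (M : ℕ) (p₁ : ℝ) : ∀ m, (counts M p₁ m).1 + (counts M p₁ m).2 = m := by
  intro m
  induction m with
  | zero => simp [counts]
  | succ n ih =>
    rw [counts]
    split_ifs <;> simp <;> omega

theorem inductive_step_FE (M : ℕ) (hM : 1 ≤ M) (p₁ : ℝ)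
    (hp₁ : (0.5 : ℝ) ≤ p₁) (hp₂ : p₁ < ((M : ℝ) + 1.5) / ((M : ℝ) + 3)) :
    ∀ m : ℕ, m < M → |Q M p₁ m| < 1 → 0 < Q M p₁ m →
      Q M p₁ (m + 1) ≤ Q M p₁ m ∧ Q M p₁ m - 1 < Q M p₁ (m + 1) ∧
      |Q M p₁ (m + 1)| < 1 := by
  intro m hm habs hQ
  have hMR : (1 : ℝ) ≤ (M : ℝ) := by exact_mod_cast hM
  have hMpos : (0 : ℝ) < (M : ℝ) := by linarith
  have hcnt : counts M p₁ (m + 1) = ((counts M p₁ m).1 + 1, (counts M p₁ m).2) := by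
    rw [counts]
    exact if_pos hQ
  have hsum : ((counts M p₁ m).1 : ℝ) + ((counts M p₁ m).2 : ℝ) = (m : ℝ) := by
    exact_mod_cast congrArg (Nat.cast : ℕ → ℝ) (counts_sum M p₁ m)
  set a : ℝ := ((counts M p₁ m).1 : ℝ) with ha
  set b : ℝ := ((counts M p₁ m).2 : ℝ) with hb
  have ha0 : 0 ≤ a := Nat.cast_nonneg _
  have hb0 : 0 ≤ b := Nat.cast_nonneg _
  have hQm : Q M p₁ m = (p₁ - ((p₁ - 0.5) / (M : ℝ)) * (m : ℝ)) * (1 + b)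
      - ((1 - p₁) + ((p₁ - 0.5) / (M : ℝ)) * (m : ℝ)) * (1 + a) := rfl
  have hQm1 : Q M p₁ (m + 1) = (p₁ - ((p₁ - 0.5) / (M : ℝ)) * ((m : ℝ) + 1)) * (1 + b)
      - ((1 - p₁) + ((p₁ - 0.5) / (M : ℝ)) * ((m : ℝ) + 1)) * (1 + (a + 1)) := by
    show Qaux M p₁ (m+1) (counts M p₁ (m+1)).1 (counts M p₁ (m+1)).2 = _
    rw [hcnt]
    simp only [Qaux, omegaFE, omegaHPO]
    push_cast
    ring
  set d : ℝ := (p₁ - 0.5) / (M : ℝ) with hd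
  have hd0 : 0 ≤ d := div_nonneg (by linarith) (le_of_lt hMpos)
  have hdM : d * (M : ℝ) = p₁ - 0.5 := div_mul_cancel₀ _ (ne_of_gt hMpos)
  have hp1lt : p₁ * ((M : ℝ) + 3) < (M : ℝ) + 1.5 := by
    rw [lt_div_iff₀ (by linarith : (0:ℝ) < (M : ℝ) + 3)] at hp₂
    linarith
  have hmM : (m : ℝ) + 1 ≤ (M : ℝ) := by exact_mod_cast hm
  have hm0 : (0 : ℝ) ≤ (m : ℝ) := Nat.cast_nonneg _
  have hp1le1 : p₁ < 1 := by nlinarith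
  have h1 : Q M p₁ (m + 1) ≤ Q M p₁ m := by
    rw [hQm, hQm1]
    nlinarith [mul_nonneg hd0 hm0, mul_nonneg hd0 ha0, mul_nonneg hd0 hb0]
  have h2 : Q M p₁ m - 1 < Q M p₁ (m + 1) := by
    rw [hQm, hQm1]
    -- need d*(2m+3) + (1-p₁) < 1, using a+b = m
    nlinarith [mul_nonneg hd0 (by linarith : (0:ℝ) ≤ (M : ℝ) - 1 - (m : ℝ)),
      mul_nonneg hd0 hm0, hsum, hdM]
  refine ⟨h1, h2, ?_⟩
  rw [abs_lt] at habs ⊢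
  constructor <;> [linarith; linarith]
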